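/- arXiv:1611.10026 — 7 statements merged into one kernel-verified Lean document; each statement's English description precedes it below -/
import Mathlib

section
/- (Rado's Theorem) Let P₁,…,P_q be subsets of a vector space Kⁿ over a field K. There exist vectors ξ₁ ∈ P₁, …, ξ_q ∈ P_q forming a linearly independent family if and only if for every subset S ⊆ {1,…,q}, the union ⋃_{i∈S} P_i contains at least card(S) linearly independent vectors. -/
open Submodule Set Module

section Aux

variable {K : Type*} [Field K] {n : ℕ}

/-- Rank condition to conclusion, for finite sets, by strong induction on total size. -/
lemma rado_aux (N : ℕ) : ∀ {q : ℕ} (A : Fin q → Finset (Fin n → K)),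
    (∑ i, (A i).card) = N →
    (∀ S : Finset (Fin q),
      S.card ≤ Set.finrank K (⋃ i ∈ S, (A i : Set (Fin n → K)))) →
    ∃ ξ : Fin q → (Fin n → K), (∀ i, ξ i ∈ A i) ∧ LinearIndependent K ξ := by
  induction N using Nat.strong_induction_on with
  | _ N ih =>
    intro q A hsum hcond
    by_cases hone : ∀ i, (A i).card ≤ 1
    · -- base case: every A i is a singleton
      have hcard : ∀ i, (A i).card = 1 := by
        intro i
        refine le_antisymm (hone i) ?_
        have h1 := hcond {i}
        simp only [Finset.card_singleton] at h1
        have h2 : (⋃ j ∈ ({i} : Finset (Fin q)), ((A j : Set (Fin n → K)))) =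
            (A i : Set (Fin n → K)) := by simp
        rw [h2] at h1
        calc 1 ≤ Set.finrank K (A i : Set (Fin n → K)) := h1
        _ ≤ (A i).card := finrank_span_finset_le_card (A i)
      have hex : ∀ i, ∃ x, A i = {x} := fun i => Finset.card_eq_one.mp (hcard i)
      choose x hx using hex
      refine ⟨x, fun i => by rw [hx i]; exact Finset.mem_singleton_self _, ?_⟩
      rw [linearIndependent_iff_card_le_finrank_span]
      have h1 := hcond Finset.univ
      have h2 : (⋃ j ∈ (Finset.univ : Finset (Fin q)), ((A j : Set (Fin n → K)))) =
          Set.range x := by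
        ext v
        simp only [Finset.mem_univ, Set.iUnion_true, Set.mem_iUnion, Set.mem_range]
        constructor
        · rintro ⟨i, hi⟩
          rw [hx i] at hi
          exact ⟨i, (Finset.mem_singleton.mp hi).symm⟩
        · rintro ⟨i, rfl⟩
          exact ⟨i, by rw [hx i]; exact Finset.mem_singleton_self _⟩
      rw [h2] at h1
      simpa using h1
    · push_neg at hone
      obtain ⟨i, hi2⟩ := hone
      have h2le : 2 ≤ (A i).card := hi2
      obtain ⟨x, hxA, y, hyA, hxy⟩ := Finset.one_lt_card.mp h2le
      classical
      have hsum_lt : ∀ z ∈ A i,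
          (∑ j, ((fun j => if j = i then (A i).erase z else A j) j).card) < N := by
        intro z hz
        rw [← hsum]
        apply Finset.sum_lt_sum
        · intro j _
          by_cases hj : j = i
          · subst hj
            have he : ((fun j' => if j' = j then (A j).erase z else A j') j)
                = (A j).erase z := by simp
            rw [he, Finset.card_erase_of_mem hz]
            exact Nat.sub_le _ _
          · simp [hj]
        · refine ⟨i, Finset.mem_univ i, ?_⟩
          have he : ((fun j' => if j' = i then (A i).erase z else A j') i)
              = (A i).erase z := by simp
          rw [he, Finset.card_erase_of_mem hz]
          omega
      -- if the condition survives deletion of z from A i, we are done by induction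
      have hrec : ∀ z ∈ A i,
          (∀ S : Finset (Fin q), S.card ≤ Set.finrank K
            (⋃ j ∈ S, (((fun j => if j = i then (A i).erase z else A j) j : Finset (Fin n → K))
              : Set (Fin n → K)))) →
          ∃ ξ : Fin q → (Fin n → K), (∀ i, ξ i ∈ A i) ∧ LinearIndependent K ξ := by
        intro z hz hcond'
        obtain ⟨ξ, hmem, hli⟩ := ih _ (hsum_lt z hz) _ rfl hcond'
        refine ⟨ξ, fun j => ?_, hli⟩
        have := hmem j
        by_cases hj : j = i
        · subst hj; simp only [if_pos rfl] at this; exact Finset.erase_subset _ _ this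
        · simpa [hj] using this
      by_cases hcx : ∀ S : Finset (Fin q), S.card ≤ Set.finrank K
          (⋃ j ∈ S, (((fun j => if j = i then (A i).erase x else A j) j : Finset (Fin n → K))
            : Set (Fin n → K)))
      · exact hrec x hxA hcx
      by_cases hcy : ∀ S : Finset (Fin q), S.card ≤ Set.finrank K
          (⋃ j ∈ S, (((fun j => if j = i then (A i).erase y else A j) j : Finset (Fin n → K))
            : Set (Fin n → K)))
      · exact hrec y hyA hcy
      -- otherwise: contradiction via submodularity of rank
      exfalso
      push_neg at hcx hcy
      obtain ⟨S, hS⟩ := hcx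
      obtain ⟨T, hT⟩ := hcy
      set X : Set (Fin n → K) :=
        ⋃ j ∈ S, (((if j = i then (A i).erase x else A j) : Finset (Fin n → K))
          : Set (Fin n → K)) with hXdef
      set Y : Set (Fin n → K) :=
        ⋃ j ∈ T, (((if j = i then (A i).erase y else A j) : Finset (Fin n → K))
          : Set (Fin n → K)) with hYdef
      -- i must belong to S and T
      have hiS : i ∈ S := by
        by_contra hiS
        have : X = ⋃ j ∈ S, ((A j : Set (Fin n → K))) := by
          apply Set.iUnion₂_congr
          intro j hj
          have : j ≠ i := fun h => hiS (h ▸ hj)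
          simp [this]
        rw [this] at hS
        exact absurd (hcond S) (not_le.mpr hS)
      have hiT : i ∈ T := by
        by_contra hiT
        have : Y = ⋃ j ∈ T, ((A j : Set (Fin n → K))) := by
          apply Set.iUnion₂_congr
          intro j hj
          have : j ≠ i := fun h => hiT (h ▸ hj)
          simp [this]
        rw [this] at hT
        exact absurd (hcond T) (not_le.mpr hT)
      -- key inclusions
      have hsub1 : (⋃ j ∈ (S ∪ T), ((A j : Set (Fin n → K)))) ⊆ X ∪ Y := by
        intro v hv
        simp only [Set.mem_iUnion, exists_prop] at hv
        obtain ⟨j, hj, hv⟩ := hv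
        by_cases hji : j = i
        · subst hji
          by_cases hvx : v = x
          · subst hvx
            right
            refine Set.mem_biUnion hiT ?_
            rw [if_pos rfl]
            exact Finset.mem_coe.mpr (Finset.mem_erase.mpr ⟨hxy, hv⟩)
          · left
            refine Set.mem_biUnion hiS ?_
            rw [if_pos rfl]
            exact Finset.mem_coe.mpr (Finset.mem_erase.mpr ⟨hvx, hv⟩)
        · rcases Finset.mem_union.mp hj with h | h
          · left; refine Set.mem_biUnion h ?_; simp [hji, hv]
          · right; refine Set.mem_biUnion h ?_; simp [hji, hv]
      have hsub2 : (⋃ j ∈ ((S ∩ T).erase i), ((A j : Set (Fin n → K)))) ⊆ X ∩ Y := by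
        intro v hv
        simp only [Set.mem_iUnion, exists_prop] at hv
        obtain ⟨j, hj, hv⟩ := hv
        obtain ⟨hji, hjST⟩ := Finset.mem_erase.mp hj
        constructor
        · refine Set.mem_biUnion (Finset.mem_inter.mp hjST).1 ?_; simp [hji, hv]
        · refine Set.mem_biUnion (Finset.mem_inter.mp hjST).2 ?_; simp [hji, hv]
      -- rank facts
      have hXY := Submodule.finrank_sup_add_finrank_inf_eq (span K X) (span K Y)
      have h3 : (S ∪ T).card ≤ Module.finrank K ↥(span K X ⊔ span K Y) := by
        calc (S ∪ T).card ≤ Set.finrank K (⋃ j ∈ (S ∪ T), ((A j : Set (Fin n → K)))) :=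
              hcond (S ∪ T)
          _ ≤ Set.finrank K (X ∪ Y) := Set.finrank_mono hsub1
          _ = Module.finrank K ↥(span K X ⊔ span K Y) := by rw [Set.finrank, Submodule.span_union]
      have h4 : ((S ∩ T).erase i).card ≤ Module.finrank K ↥(span K X ⊓ span K Y) := by
        calc ((S ∩ T).erase i).card
            ≤ Set.finrank K (⋃ j ∈ ((S ∩ T).erase i), ((A j : Set (Fin n → K)))) :=
              hcond _
          _ ≤ Set.finrank K (X ∩ Y) := Set.finrank_mono hsub2
          _ ≤ Module.finrank K ↥(span K X ⊓ span K Y) := by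
              apply Submodule.finrank_mono
              exact le_inf (span_mono Set.inter_subset_left)
                (span_mono Set.inter_subset_right)
      have h5 : (S ∪ T).card + (S ∩ T).card = S.card + T.card :=
        Finset.card_union_add_card_inter S T
      have h6 : 1 ≤ (S ∩ T).card :=
        Finset.card_pos.mpr ⟨i, Finset.mem_inter.mpr ⟨hiS, hiT⟩⟩
      have h7 : ((S ∩ T).erase i).card = (S ∩ T).card - 1 :=
        Finset.card_erase_of_mem (Finset.mem_inter.mpr ⟨hiS, hiT⟩)
      rw [h7] at h4
      rw [Set.finrank] at hS hT
      omega

end Aux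

/-- Rado's Theorem. -/
theorem rado_theorem {K : Type*} [Field K] (n q : ℕ) (P : Fin q → Set (Fin n → K)) :
    (∃ ξ : Fin q → (Fin n → K), (∀ i, ξ i ∈ P i) ∧ LinearIndependent K ξ) ↔
      ∀ S : Finset (Fin q), ∃ ζ : Fin S.card → (Fin n → K),
        (∀ j, ∃ i ∈ S, ζ j ∈ P i) ∧ LinearIndependent K ζ := by
  constructor
  · rintro ⟨ξ, hmem, hli⟩ S
    let e := S.orderIsoOfFin rfl
    refine ⟨fun j => ξ (e j), fun j => ⟨e j, (e j).2, hmem _⟩, ?_⟩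
    exact hli.comp (fun j => (e j : Fin q))
      (fun a b hab => e.injective (Subtype.ext hab))
  · intro h
    classical
    -- replace each P i by a finite subset with the same span
    have hfin : ∀ i, ∃ b : Finset (Fin n → K), ↑b ⊆ P i ∧
        span K (b : Set (Fin n → K)) = span K (P i) := by
      intro i
      obtain ⟨b, hb, hspan, hli⟩ := exists_linearIndependent K (P i)
      have hbf : b.Finite := hli.setFinite
      exact ⟨hbf.toFinset, by simpa using hb, by rw [Set.Finite.coe_toFinset]; exact hspan⟩
    choose A hA hAspan using hfin
    have hspan_eq : ∀ S : Finset (Fin q),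
        span K (⋃ i ∈ S, ((A i : Set (Fin n → K)))) = span K (⋃ i ∈ S, P i) := by
      intro S
      apply le_antisymm
      · exact span_mono (Set.iUnion₂_mono fun i _ => hA i)
      · rw [span_le]
        rintro v hv
        simp only [Set.mem_iUnion, exists_prop] at hv
        obtain ⟨i, hi, hv⟩ := hv
        have : v ∈ span K ((A i : Set (Fin n → K))) := by
          rw [hAspan i]; exact subset_span hv
        exact span_mono (Set.subset_biUnion_of_mem (u := fun i => ((A i : Set (Fin n → K))))
          hi) this
    have hcond : ∀ S : Finset (Fin q),
        S.card ≤ Set.finrank K (⋃ i ∈ S, ((A i : Set (Fin n → K)))) := by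
      intro S
      obtain ⟨ζ, hζmem, hζli⟩ := h S
      have hsub : Set.range ζ ⊆ ⋃ i ∈ S, P i := by
        rintro v ⟨j, rfl⟩
        obtain ⟨i, hi, hv⟩ := hζmem j
        exact Set.mem_biUnion hi hv
      calc S.card = Fintype.card (Fin S.card) := (Fintype.card_fin _).symm
        _ ≤ Set.finrank K (Set.range ζ) := linearIndependent_iff_card_le_finrank_span.mp hζli
        _ ≤ Set.finrank K (⋃ i ∈ S, P i) := Set.finrank_mono hsub
        _ = Set.finrank K (⋃ i ∈ S, ((A i : Set (Fin n → K)))) := by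
            rw [Set.finrank, Set.finrank, hspan_eq]
    obtain ⟨ξ, hmem, hli⟩ := rado_aux _ A rfl hcond
    exact ⟨ξ, fun i => hA i (hmem i), hli⟩
end

section
/- Let P₁,…,P_q be subsets of Kⁿ and ν₁,…,ν_q natural numbers. There exists a linearly independent family {ξ_{i,j} : 1 ≤ i ≤ q, 1 ≤ j ≤ ν_i} with ξ_{i,j} ∈ P_i for all i,j if and only if for every subset S ⊆ {1,…,q}, dim(∑_{i∈S} span(P_i)) ≥ ∑_{i∈S} ν_i. -/
open Submodule Module

theorem rado_core {K V : Type*} [Field K] [AddCommGroup V] [Module K V]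
    [FiniteDimensional K V] {ι : Type*} [Fintype ι] [DecidableEq ι]
    (Q : ι → Finset V)
    (h : ∀ T : Finset ι, T.card ≤ finrank K ↥(⨆ s ∈ T, span K ((Q s : Set V)))) :
    ∃ ξ : ι → V, (∀ s, ξ s ∈ Q s) ∧ LinearIndependent K ξ := by
  classical
  suffices H : ∀ N (Q : ι → Finset V), ∑ s, (Q s).card = N →
      (∀ T : Finset ι, T.card ≤ finrank K ↥(⨆ s ∈ T, span K ((Q s : Set V)))) →
      ∃ ξ : ι → V, (∀ s, ξ s ∈ Q s) ∧ LinearIndependent K ξ from H _ Q rfl h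
  intro N
  induction N using Nat.strong_induction_on with
  | _ N IH =>
  intro Q hN h
  by_cases hone : ∀ s, (Q s).card ≤ 1
  · -- every Q s is (at most) a singleton
    have hne : ∀ s, ∃ x, x ∈ Q s := by
      intro s
      by_contra hc
      push_neg at hc
      have hQ : Q s = ∅ := Finset.eq_empty_iff_forall_notMem.mpr hc
      have h1 := h {s}
      have h2 : (⨆ s1 ∈ ({s} : Finset ι), span K ((Q s1 : Set V))) = span K ((Q s : Set V)) := by
        simp
      rw [Finset.card_singleton, h2, hQ] at h1
      simp at h1
    choose ξ hξ using hne
    have hQs : ∀ s, (Q s : Set V) = {ξ s} := by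
      intro s
      have h1 := Finset.card_le_one.mp (hone s)
      ext z
      simp only [Finset.mem_coe, Set.mem_singleton_iff]
      exact ⟨fun hz => h1 z hz (ξ s) (hξ s), fun hz => hz ▸ hξ s⟩
    refine ⟨ξ, hξ, linearIndependent_iff_card_eq_finrank_span.mpr ?_⟩
    refine le_antisymm ?_ (finrank_range_le_card ξ)
    have hc := h Finset.univ
    have huniv : (⨆ s ∈ (Finset.univ : Finset ι), span K ((Q s : Set V)))
        = ⨆ s, span K ((Q s : Set V)) := by simp
    have heq : (⨆ s, span K ((Q s : Set V))) = span K (Set.range ξ) := by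
      rw [span_range_eq_iSup]
      exact iSup_congr fun s => by rw [hQs s]
    rw [Finset.card_univ, huniv, heq] at hc
    exact hc
  · push_neg at hone
    obtain ⟨t, ht⟩ := hone
    obtain ⟨x, hx, y, hy, hxy⟩ := Finset.one_lt_card.mp ht
    -- helper facts
    have hupd_card : ∀ z ∈ Q t, ∑ s, ((Function.update Q t ((Q t).erase z)) s).card < N := by
      intro z hz
      rw [← hN]
      calc ∑ s, ((Function.update Q t ((Q t).erase z)) s).card
          = ((Q t).erase z).card + ∑ s ∈ Finset.univ \ {t}, (Q s).card := by
            rw [← Finset.sum_update_of_mem (Finset.mem_univ t)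
              (fun s => (Q s).card) ((Q t).erase z).card]
            refine Finset.sum_congr rfl fun s _ => ?_
            rcases eq_or_ne s t with hs | hs
            · subst hs; simp
            · simp [Function.update_of_ne hs]
        _ < (Q t).card + ∑ s ∈ Finset.univ \ {t}, (Q s).card := by
            have := Finset.card_erase_of_mem hz
            omega
        _ = ∑ s, (Q s).card := by
            rw [← Finset.sum_update_of_mem (Finset.mem_univ t)
              (fun s => (Q s).card) ((Q t).card)]
            refine Finset.sum_congr rfl fun s _ => ?_
            rcases eq_or_ne s t with hs | hs
            · subst hs; simp
            · simp [Function.update_of_ne hs]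
    have hsub : ∀ z, ∀ s, ((Function.update Q t ((Q t).erase z)) s : Set V) ⊆ Q s := by
      intro z s
      rcases eq_or_ne s t with hs | hs
      · subst hs
        simp only [Function.update_self]
        intro a ha
        exact (Finset.mem_erase.mp ha).2
      · simp [Function.update_of_ne hs]
    -- if the modified family satisfies the condition, we win
    have key : ∀ z ∈ Q t,
        (∀ T : Finset ι, T.card ≤ finrank K
          ↥(⨆ s ∈ T, span K (((Function.update Q t ((Q t).erase z)) s : Set V)))) →
        ∃ ξ : ι → V, (∀ s, ξ s ∈ Q s) ∧ LinearIndependent K ξ := by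
      intro z hz hcond
      obtain ⟨ξ, hmem, hli⟩ := IH _ (hupd_card z hz) _ rfl hcond
      exact ⟨ξ, fun s => hsub z s (hmem s), hli⟩
    by_cases h1 : ∀ T : Finset ι, T.card ≤ finrank K
        ↥(⨆ s ∈ T, span K (((Function.update Q t ((Q t).erase x)) s : Set V)))
    · exact key x hx h1
    by_cases h2 : ∀ T : Finset ι, T.card ≤ finrank K
        ↥(⨆ s ∈ T, span K (((Function.update Q t ((Q t).erase y)) s : Set V)))
    · exact key y hy h2
    -- contradiction via dimension counting
    exfalso
    push_neg at h1 h2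
    obtain ⟨T₁, hT₁⟩ := h1
    obtain ⟨T₂, hT₂⟩ := h2
    set Q₁ := Function.update Q t ((Q t).erase x) with hQ₁
    set Q₂ := Function.update Q t ((Q t).erase y) with hQ₂
    set F₁ := ⨆ s ∈ T₁, span K ((Q₁ s : Set V)) with hF₁
    set F₂ := ⨆ s ∈ T₂, span K ((Q₂ s : Set V)) with hF₂
    have htT₁ : t ∈ T₁ := by
      by_contra hc
      have : F₁ = ⨆ s ∈ T₁, span K ((Q s : Set V)) := by
        refine biSup_congr fun s hs => ?_
        have : s ≠ t := fun he => hc (he ▸ hs)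
        simp [hQ₁, Function.update_of_ne this]
      rw [this] at hT₁
      exact absurd (h T₁) (by omega)
    have htT₂ : t ∈ T₂ := by
      by_contra hc
      have : F₂ = ⨆ s ∈ T₂, span K ((Q s : Set V)) := by
        refine biSup_congr fun s hs => ?_
        have : s ≠ t := fun he => hc (he ▸ hs)
        simp [hQ₂, Function.update_of_ne this]
      rw [this] at hT₂
      exact absurd (h T₂) (by omega)
    have hQt : (Q t : Set V) = (((Q t).erase x : Finset V) : Set V) ∪ (((Q t).erase y : Finset V) : Set V) := by
      ext z
      simp only [Set.mem_union, Finset.coe_erase, Set.mem_diff, Set.mem_singleton_iff, Finset.mem_coe]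
      constructor
      · intro hz
        by_cases hzx : z = x
        · exact Or.inr ⟨hz, hzx ▸ hxy⟩
        · exact Or.inl ⟨hz, hzx⟩
      · rintro (⟨hz, _⟩ | ⟨hz, _⟩) <;> exact hz
    have hsup : (⨆ s ∈ T₁ ∪ T₂, span K ((Q s : Set V))) ≤ F₁ ⊔ F₂ := by
      refine iSup₂_le fun s hs => ?_
      by_cases hst : s = t
      · subst hst
        rw [hQt, span_union]
        refine sup_le ?_ ?_
        · exact le_trans (le_trans (by simp [hQ₁]) (le_iSup₂ (f := fun s _ => span K ((Q₁ s : Set V))) s htT₁)) le_sup_left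
        · exact le_trans (le_trans (by simp [hQ₂]) (le_iSup₂ (f := fun s _ => span K ((Q₂ s : Set V))) s htT₂)) le_sup_right
      · rcases Finset.mem_union.mp hs with hs1 | hs2
        · exact le_trans (le_trans (by simp [hQ₁, Function.update_of_ne hst]) (le_iSup₂ (f := fun s _ => span K ((Q₁ s : Set V))) s hs1)) le_sup_left
        · exact le_trans (le_trans (by simp [hQ₂, Function.update_of_ne hst]) (le_iSup₂ (f := fun s _ => span K ((Q₂ s : Set V))) s hs2)) le_sup_right
    have hinf : (⨆ s ∈ (T₁ ∩ T₂).erase t, span K ((Q s : Set V))) ≤ F₁ ⊓ F₂ := by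
      refine iSup₂_le fun s hs => ?_
      obtain ⟨hst, hs12⟩ := Finset.mem_erase.mp hs
      rcases Finset.mem_inter.mp hs12 with ⟨hs1, hs2⟩
      refine le_inf ?_ ?_
      · exact le_trans (by simp [hQ₁, Function.update_of_ne hst]) (le_iSup₂ (f := fun s _ => span K ((Q₁ s : Set V))) s hs1)
      · exact le_trans (by simp [hQ₂, Function.update_of_ne hst]) (le_iSup₂ (f := fun s _ => span K ((Q₂ s : Set V))) s hs2)
    have hrank := Submodule.finrank_sup_add_finrank_inf_eq F₁ F₂
    have hmono1 : finrank K ↥(⨆ s ∈ T₁ ∪ T₂, span K ((Q s : Set V))) ≤ finrank K ↥(F₁ ⊔ F₂) :=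
      Submodule.finrank_mono hsup
    have hmono2 : finrank K ↥(⨆ s ∈ (T₁ ∩ T₂).erase t, span K ((Q s : Set V))) ≤ finrank K ↥(F₁ ⊓ F₂) :=
      Submodule.finrank_mono hinf
    have hu := h (T₁ ∪ T₂)
    have hi := h ((T₁ ∩ T₂).erase t)
    have hcard : T₁.card + T₂.card = (T₁ ∪ T₂).card + (T₁ ∩ T₂).card :=
      (Finset.card_union_add_card_inter T₁ T₂).symm
    have htmem : t ∈ T₁ ∩ T₂ := Finset.mem_inter.mpr ⟨htT₁, htT₂⟩
    have herase : ((T₁ ∩ T₂).erase t).card = (T₁ ∩ T₂).card - 1 :=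
      Finset.card_erase_of_mem htmem
    have hpos : 0 < (T₁ ∩ T₂).card := Finset.card_pos.mpr ⟨t, htmem⟩
    omega

/-- Rado's theorem with multiplicities. -/
theorem rado_multiplicities {K : Type*} [Field K] (n q : ℕ)
    (P : Fin q → Set (Fin n → K)) (ν : Fin q → ℕ) :
    (∃ ξ : (Σ i : Fin q, Fin (ν i)) → (Fin n → K),
        (∀ s, ξ s ∈ P s.1) ∧ LinearIndependent K ξ) ↔
      ∀ S : Finset (Fin q),
        ∑ i ∈ S, ν i ≤ Module.finrank K ↥(⨆ i ∈ S, Submodule.span K (P i)) := by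
  classical
  constructor
  · rintro ⟨ξ, hmem, hli⟩ S
    set W : Submodule K (Fin n → K) := ⨆ i ∈ S, Submodule.span K (P i) with hW
    let e : (Σ i : S, Fin (ν i)) → (Σ i : Fin q, Fin (ν i)) := fun p => ⟨p.1, p.2⟩
    have he : Function.Injective e := by
      rintro ⟨⟨i, hi⟩, j⟩ ⟨⟨i', hi'⟩, j'⟩ hp
      obtain ⟨h1, h2⟩ := Sigma.mk.inj_iff.mp hp
      subst h1
      have : j = j' := eq_of_heq h2
      subst this
      rfl
    have hliW : LinearIndependent K (ξ ∘ e) := hli.comp e he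
    have hmemW : ∀ p : Σ i : S, Fin (ν i), ξ (e p) ∈ W := by
      intro p
      have h1 : ξ (e p) ∈ P p.1 := hmem (e p)
      have h2 : Submodule.span K (P p.1) ≤ W :=
        le_iSup₂ (f := fun i (_ : i ∈ S) => Submodule.span K (P i)) (p.1 : Fin q) p.1.2
      exact h2 (Submodule.subset_span h1)
    let η : (Σ i : S, Fin (ν i)) → W := fun p => ⟨ξ (e p), hmemW p⟩
    have hliη : LinearIndependent K η := by
      apply LinearIndependent.of_comp W.subtype
      exact hliW
    have hcard := hliη.fintype_card_le_finrank
    calc ∑ i ∈ S, ν i = ∑ i : S, ν i := (Finset.sum_coe_sort S ν).symm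
      _ = Fintype.card (Σ i : S, Fin (ν i)) := by
          rw [Fintype.card_sigma]
          simp
      _ ≤ Module.finrank K ↥W := hcard
  · intro hc
    -- choose finite subsets with the same span
    have hfin : ∀ i : Fin q, ∃ Q : Finset (Fin n → K),
        (Q : Set (Fin n → K)) ⊆ P i ∧
        Submodule.span K ((Q : Set (Fin n → K))) = Submodule.span K (P i) := by
      intro i
      obtain ⟨b, hb_sub, hb_span, hb_li⟩ := exists_linearIndependent K (P i)
      have hbfin : b.Finite := hb_li.setFinite
      exact ⟨hbfin.toFinset, by simpa using hb_sub, by rw [Set.Finite.coe_toFinset, hb_span]⟩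
    choose Q hQsub hQspan using hfin
    have hcond : ∀ T : Finset (Σ i : Fin q, Fin (ν i)),
        T.card ≤ Module.finrank K ↥(⨆ s ∈ T, Submodule.span K ((Q s.1 : Set (Fin n → K)))) := by
      intro T
      set S := T.image Sigma.fst with hS
      have hsub : T ⊆ S.sigma (fun _ => Finset.univ) := by
        intro s hs
        rw [Finset.mem_sigma]
        exact ⟨Finset.mem_image_of_mem _ hs, Finset.mem_univ _⟩
      have h1 : T.card ≤ ∑ i ∈ S, ν i := by
        calc T.card ≤ (S.sigma (fun _ => Finset.univ)).card := Finset.card_le_card hsub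
          _ = ∑ i ∈ S, ν i := by rw [Finset.card_sigma]; simp
      have h2 : (⨆ i ∈ S, Submodule.span K (P i)) ≤
          ⨆ s ∈ T, Submodule.span K ((Q s.1 : Set (Fin n → K))) := by
        refine iSup₂_le fun i hi => ?_
        obtain ⟨s, hsT, hsi⟩ := Finset.mem_image.mp hi
        rw [← hsi, ← hQspan s.1]
        exact le_iSup₂ (f := fun s (_ : s ∈ T) =>
          Submodule.span K ((Q s.1 : Set (Fin n → K)))) s hsT
      exact le_trans (le_trans h1 (hc S)) (Submodule.finrank_mono h2)
    obtain ⟨ξ, hmem, hli⟩ := rado_core (fun s : Σ i : Fin q, Fin (ν i) => Q s.1) hcond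
    exact ⟨ξ, fun s => hQsub s.1 (hmem s), hli⟩
end

section
/- Let P₁,…,P_q and Q₁,…,Q_q be subsets of Kⁿ with span(P_i) = span(Q_i) for each i. Then there exist linearly independent vectors ξ₁ ∈ P₁,…,ξ_q ∈ P_q if and only if there exist linearly independent vectors ζ₁ ∈ Q₁,…,ζ_q ∈ Q_q. -/
open Submodule

/-- Exchange lemma: in an independent family, a vector lying in the span of a set `s`
can be replaced by some element of `s`, keeping independence. -/
lemma exchange_lemma {K V : Type*} [Field K] [AddCommGroup V] [Module K V]
    {ι : Type*} [Fintype ι] [DecidableEq ι] {v : ι → V}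
    (hv : LinearIndependent K v) (k : ι) {s : Set V} (hk : v k ∈ span K s) :
    ∃ w ∈ s, LinearIndependent K (Function.update v k w) := by
  have hnot : ¬ ∀ w ∈ s, w ∈ span K (v '' {k}ᶜ) := by
    intro h
    have hle : span K s ≤ span K (v '' {k}ᶜ) := span_le.mpr (fun w hw => h w hw)
    exact hv.notMem_span_image (by simp) (hle hk)
  push_neg at hnot
  obtain ⟨w, hws, hwn⟩ := hnot
  refine ⟨w, hws, ?_⟩
  rw [Fintype.linearIndependent_iff]
  intro g hg
  have hsum : g k • w + ∑ i ∈ Finset.univ.erase k, g i • v i = 0 := by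
    rw [← hg, ← Finset.add_sum_erase _ _ (Finset.mem_univ k)]
    congr 1
    · simp
    · exact Finset.sum_congr rfl fun i hi =>
        by rw [Function.update_of_ne (Finset.ne_of_mem_erase hi)]
  have hmem : ∑ i ∈ Finset.univ.erase k, g i • v i ∈ span K (v '' {k}ᶜ) := by
    refine Submodule.sum_mem _ fun i hi => Submodule.smul_mem _ _ ?_
    exact subset_span ⟨i, Finset.ne_of_mem_erase hi, rfl⟩
  have hck : g k = 0 := by
    by_contra hck
    apply hwn
    have hw : w = (g k)⁻¹ • (-(∑ i ∈ Finset.univ.erase k, g i • v i)) := by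
      have : g k • w = -(∑ i ∈ Finset.univ.erase k, g i • v i) := by
        rw [eq_neg_iff_add_eq_zero]; exact hsum
      rw [← this, smul_smul, inv_mul_cancel₀ hck, one_smul]
    rw [hw]
    exact Submodule.smul_mem _ _ (Submodule.neg_mem _ hmem)
  have hrest : ∑ i, (Function.update g k 0 i) • v i = 0 := by
    rw [← Finset.add_sum_erase _ _ (Finset.mem_univ k)]
    have : ∑ i ∈ Finset.univ.erase k, (Function.update g k 0 i) • v i
        = ∑ i ∈ Finset.univ.erase k, g i • v i :=
      Finset.sum_congr rfl fun i hi =>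
        by rw [Function.update_of_ne (Finset.ne_of_mem_erase hi)]
    rw [this]
    simpa [hck] using hsum
  have := Fintype.linearIndependent_iff.mp hv _ hrest
  intro i
  by_cases hik : i = k
  · rw [hik]; exact hck
  · have := this i
    rwa [Function.update_of_ne hik] at this

/-- One direction of the main theorem, by replacing the transversal vectors one at a time. -/
lemma transversal_mp {K : Type*} [Field K] (n q : ℕ)
    (P Q : Fin q → Set (Fin n → K))
    (hPQ : ∀ i, Submodule.span K (P i) = Submodule.span K (Q i)) :
    (∃ ξ : Fin q → (Fin n → K), (∀ i, ξ i ∈ P i) ∧ LinearIndependent K ξ) →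
      (∃ ζ : Fin q → (Fin n → K), (∀ i, ζ i ∈ Q i) ∧ LinearIndependent K ζ) := by
  rintro ⟨ξ, hξ, hind⟩
  -- strengthen: for every k ≤ q there is an independent family in Q below k, in P above
  have key : ∀ k : ℕ, k ≤ q → ∃ ζ : Fin q → (Fin n → K),
      (∀ i : Fin q, ((i : ℕ) < k → ζ i ∈ Q i) ∧ (k ≤ (i : ℕ) → ζ i ∈ P i)) ∧
      LinearIndependent K ζ := by
    intro k
    induction k with
    | zero => exact fun _ => ⟨ξ, fun i => ⟨fun h => absurd h (Nat.not_lt_zero _),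
        fun _ => hξ i⟩, hind⟩
    | succ k ih =>
      intro hk1
      obtain ⟨ζ, hζ, hζind⟩ := ih (Nat.le_of_succ_le hk1)
      set kk : Fin q := ⟨k, hk1⟩ with hkk
      have hspan : ζ kk ∈ Submodule.span K (Q kk) := by
        rw [← hPQ]
        exact Submodule.subset_span ((hζ kk).2 (le_refl _))
      obtain ⟨w, hws, hwind⟩ := exchange_lemma hζind kk hspan
      refine ⟨Function.update ζ kk w, fun i => ⟨?_, ?_⟩, hwind⟩
      · intro hi
        by_cases hik : i = kk
        · rw [hik, Function.update_self]; exact hws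
        · rw [Function.update_of_ne hik]
          refine (hζ i).1 ?_
          have : (i : ℕ) ≠ k := fun h => hik (Fin.ext h)
          omega
      · intro hi
        have hik : i ≠ kk := by
          intro h
          rw [h] at hi
          simp [hkk] at hi
        rw [Function.update_of_ne hik]
        exact (hζ i).2 (by omega)
  obtain ⟨ζ, hζ, hζind⟩ := key q le_rfl
  exact ⟨ζ, fun i => (hζ i).1 i.isLt, hζind⟩

/-- Solvability of the independent-transversal problem depends only on spans. -/
theorem transversal_depends_only_on_span {K : Type*} [Field K] (n q : ℕ)
    (P Q : Fin q → Set (Fin n → K))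
    (hPQ : ∀ i, Submodule.span K (P i) = Submodule.span K (Q i)) :
    (∃ ξ : Fin q → (Fin n → K), (∀ i, ξ i ∈ P i) ∧ LinearIndependent K ξ) ↔
      (∃ ζ : Fin q → (Fin n → K), (∀ i, ζ i ∈ Q i) ∧ LinearIndependent K ζ) := by
  exact ⟨transversal_mp n q P Q hPQ, transversal_mp n q Q P (fun i => (hPQ i).symm)⟩
end

section
/- With the notation of the previous context, suppose additionally that ℛ(μ) is a proper subspace of ℛ_j(μ), i.e., ℛ(μ) ⊆ ℛ_j(μ) and dim ℛ(μ) < dim ℛ_j(μ). Then span_ℂ(R̂_j(μ)) = ℛ_j(μ). -/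
open Matrix

/-- If ℛ(μ) is a proper subspace of ℛ_j(μ), then span(R̂_j(μ)) = ℛ_j(μ). -/
theorem span_Rhat_eq_Rj {n m p : ℕ}
    (A : Matrix (Fin n) (Fin n) ℂ) (B : Matrix (Fin n) (Fin m) ℂ)
    (C : Matrix (Fin p) (Fin n) ℂ) (D : Matrix (Fin p) (Fin m) ℂ)
    (μ : ℂ) (j : Fin p)
    (R : Set (Fin n → ℂ)) (Rj : Set (Fin n → ℂ)) (Rhatj : Set (Fin n → ℂ))
    (hR : R = {v | ∃ w : Fin m → ℂ,
      (A - μ • 1).mulVec v + B.mulVec w = 0 ∧ C.mulVec v + D.mulVec w = 0})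
    (hRj : Rj = {v | ∃ w : Fin m → ℂ,
      (A - μ • 1).mulVec v + B.mulVec w = 0 ∧
        ∀ i : Fin p, i ≠ j → (C.mulVec v + D.mulVec w) i = 0})
    (hRhatj : Rhatj = {v | ∃ w : Fin m → ℂ, ∃ δ : ℝ, δ ≠ 0 ∧
      (A - μ • 1).mulVec v + B.mulVec w = 0 ∧
        C.mulVec v + D.mulVec w = (δ : ℂ) • (Pi.single j 1 : Fin p → ℂ)})
    (hsub : R ⊆ Rj)
    (hdim : Module.finrank ℂ (Submodule.span ℂ R) <
      Module.finrank ℂ (Submodule.span ℂ Rj)) :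
    Submodule.span ℂ Rhatj = Submodule.span ℂ Rj := by
  subst hR hRj hRhatj
  -- Rj is not contained in R
  have hne : ∃ v0, v0 ∈ {v | ∃ w : Fin m → ℂ,
      (A - μ • 1).mulVec v + B.mulVec w = 0 ∧
        ∀ i : Fin p, i ≠ j → (C.mulVec v + D.mulVec w) i = 0} ∧
      v0 ∉ {v | ∃ w : Fin m → ℂ,
      (A - μ • 1).mulVec v + B.mulVec w = 0 ∧ C.mulVec v + D.mulVec w = 0} := by
    by_contra h
    push_neg at h
    have : {v | ∃ w : Fin m → ℂ,
      (A - μ • 1).mulVec v + B.mulVec w = 0 ∧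
        ∀ i : Fin p, i ≠ j → (C.mulVec v + D.mulVec w) i = 0} ⊆
        {v | ∃ w : Fin m → ℂ,
      (A - μ • 1).mulVec v + B.mulVec w = 0 ∧ C.mulVec v + D.mulVec w = 0} :=
      fun v hv => h v hv
    have := Set.Subset.antisymm hsub this
    rw [this] at hdim
    exact lt_irrefl _ hdim
  obtain ⟨v0, ⟨w0, hst0, hout0⟩, hnot0⟩ := hne
  set c0 : ℂ := (C.mulVec v0 + D.mulVec w0) j with hc0
  have hc0ne : c0 ≠ 0 := by
    intro hz
    apply hnot0
    refine ⟨w0, hst0, ?_⟩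
    funext i
    by_cases hi : i = j
    · subst hi; exact hz
    · exact hout0 i hi
  -- the normalized element v1 with output exactly Pi.single j 1
  set v1 : Fin n → ℂ := c0⁻¹ • v0 with hv1
  set w1 : Fin m → ℂ := c0⁻¹ • w0 with hw1
  have hst1 : (A - μ • 1).mulVec v1 + B.mulVec w1 = 0 := by
    rw [hv1, hw1, mulVec_smul, mulVec_smul, ← smul_add, hst0, smul_zero]
  have hout1 : C.mulVec v1 + D.mulVec w1 = (Pi.single j 1 : Fin p → ℂ) := by
    rw [hv1, hw1, mulVec_smul, mulVec_smul, ← smul_add]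
    funext i
    by_cases hi : i = j
    · subst hi
      simp [Pi.single_eq_same, inv_mul_cancel₀ hc0ne, ← hc0]
    · simp [Pi.single_eq_of_ne hi, hout0 i hi]
  have hv1mem : v1 ∈ {v | ∃ w : Fin m → ℂ, ∃ δ : ℝ, δ ≠ 0 ∧
      (A - μ • 1).mulVec v + B.mulVec w = 0 ∧
        C.mulVec v + D.mulVec w = (δ : ℂ) • (Pi.single j 1 : Fin p → ℂ)} := by
    exact ⟨w1, 1, one_ne_zero, hst1, by simp [hout1]⟩
  apply le_antisymm
  · apply Submodule.span_mono
    rintro v ⟨w, δ, hδ, hst, hout⟩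
    refine ⟨w, hst, fun i hi => ?_⟩
    rw [hout]
    simp [Pi.single_eq_of_ne hi]
  · rw [Submodule.span_le]
    rintro v ⟨w, hst, hout⟩
    set c : ℂ := (C.mulVec v + D.mulVec w) j with hc
    have houtv : C.mulVec v + D.mulVec w = c • (Pi.single j 1 : Fin p → ℂ) := by
      funext i
      by_cases hi : i = j
      · subst hi; simp [← hc]
      · simp [Pi.single_eq_of_ne hi, hout i hi]
    by_cases hcz : c = 0
    · -- v ∈ R; write v = (v + v1) - v1
      have hmem : v + v1 ∈ {v | ∃ w : Fin m → ℂ, ∃ δ : ℝ, δ ≠ 0 ∧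
          (A - μ • 1).mulVec v + B.mulVec w = 0 ∧
            C.mulVec v + D.mulVec w = (δ : ℂ) • (Pi.single j 1 : Fin p → ℂ)} := by
        refine ⟨w + w1, 1, one_ne_zero, ?_, ?_⟩
        · rw [mulVec_add, mulVec_add]
          have : (A - μ • 1).mulVec v + B.mulVec w +
              ((A - μ • 1).mulVec v1 + B.mulVec w1) = 0 := by rw [hst, hst1]; simp
          rw [← this]; abel
        · rw [mulVec_add, mulVec_add]
          have : C.mulVec v + D.mulVec w + (C.mulVec v1 + D.mulVec w1)
              = ((1:ℝ) : ℂ) • (Pi.single j 1 : Fin p → ℂ) := by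
            rw [houtv, hout1, hcz]; simp
          rw [← this]; abel
      have h1 : v + v1 ∈ Submodule.span ℂ {v | ∃ w : Fin m → ℂ, ∃ δ : ℝ, δ ≠ 0 ∧
          (A - μ • 1).mulVec v + B.mulVec w = 0 ∧
            C.mulVec v + D.mulVec w = (δ : ℂ) • (Pi.single j 1 : Fin p → ℂ)} :=
        Submodule.subset_span hmem
      have h2 : v1 ∈ Submodule.span ℂ {v | ∃ w : Fin m → ℂ, ∃ δ : ℝ, δ ≠ 0 ∧
          (A - μ • 1).mulVec v + B.mulVec w = 0 ∧
            C.mulVec v + D.mulVec w = (δ : ℂ) • (Pi.single j 1 : Fin p → ℂ)} :=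
        Submodule.subset_span hv1mem
      have := sub_mem h1 h2
      simpa using this
    · -- scale v by c⁻¹
      have hmem : c⁻¹ • v ∈ {v | ∃ w : Fin m → ℂ, ∃ δ : ℝ, δ ≠ 0 ∧
          (A - μ • 1).mulVec v + B.mulVec w = 0 ∧
            C.mulVec v + D.mulVec w = (δ : ℂ) • (Pi.single j 1 : Fin p → ℂ)} := by
        refine ⟨c⁻¹ • w, 1, one_ne_zero, ?_, ?_⟩
        · rw [mulVec_smul, mulVec_smul, ← smul_add, hst, smul_zero]
        · rw [mulVec_smul, mulVec_smul, ← smul_add, houtv, smul_smul,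
            inv_mul_cancel₀ hcz]
          simp
      have h1 : c⁻¹ • v ∈ Submodule.span ℂ {v | ∃ w : Fin m → ℂ, ∃ δ : ℝ, δ ≠ 0 ∧
          (A - μ • 1).mulVec v + B.mulVec w = 0 ∧
            C.mulVec v + D.mulVec w = (δ : ℂ) • (Pi.single j 1 : Fin p → ℂ)} :=
        Submodule.subset_span hmem
      have := Submodule.smul_mem _ c h1
      rw [smul_smul, mul_inv_cancel₀ hcz, one_smul] at this
      exact this
end

section
/- Let γ₁ = 0, γ₂ = 1 and β₁ ∈ ℂ with β₁ ≠ 0. Then γ̄₁ + γ₂ = 1 and det [[γ̄₁ + γ₂β₁, γ₁α₁],[γ₂β₂, γ₁α₂ + γ̄₂]] = β₁ ≠ 0 for all α₁, α₂, β₂ ∈ ℂ. More generally, for all α₁, α₂, β₁, β₂ ∈ ℂ there exist γ₁, γ₂ ∈ ℂ such that γ̄₁ + γ₂ = 1 and the determinant of [[γ̄₁ + γ₂β₁, γ₁α₁],[γ₂β₂, γ₁α₂ + γ̄₂]] is nonzero. -/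
/-- Key algebraic step of the affine Kimura lemma. -/
theorem kimura_determinant_step :
    (∀ β₁ : ℂ, β₁ ≠ 0 → ∀ α₁ α₂ β₂ : ℂ,
      starRingEnd ℂ (0 : ℂ) + 1 = 1 ∧
      (starRingEnd ℂ (0 : ℂ) + 1 * β₁) * ((0 : ℂ) * α₂ + starRingEnd ℂ (1 : ℂ)) -
        (1 * β₂) * ((0 : ℂ) * α₁) = β₁ ∧ β₁ ≠ 0) ∧
    ∀ α₁ α₂ β₁ β₂ : ℂ, ∃ γ₁ γ₂ : ℂ,
      starRingEnd ℂ γ₁ + γ₂ = 1 ∧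
      (starRingEnd ℂ γ₁ + γ₂ * β₁) * (γ₁ * α₂ + starRingEnd ℂ γ₂) -
        (γ₂ * β₂) * (γ₁ * α₁) ≠ 0 := by
  constructor
  · intro β₁ hβ₁ α₁ α₂ β₂
    refine ⟨by simp, ?_, hβ₁⟩
    simp
  · intro α₁ α₂ β₁ β₂
    by_cases hβ₁ : β₁ ≠ 0
    · exact ⟨0, 1, by simp, by simpa using hβ₁⟩
    push_neg at hβ₁
    subst hβ₁
    by_cases hα₂ : α₂ ≠ 0
    · exact ⟨1, 0, by simp, by simpa using hα₂⟩
    push_neg at hα₂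
    subst hα₂
    by_cases h : α₁ * β₂ = 1
    · refine ⟨1 + Complex.I, Complex.I, ?_, ?_⟩
      · simp [map_add, Complex.conj_I]
      · have : (starRingEnd ℂ (1 + Complex.I) + Complex.I * 0) *
            ((1 + Complex.I) * 0 + starRingEnd ℂ Complex.I) -
            (Complex.I * β₂) * ((1 + Complex.I) * α₁) =
            (1 - Complex.I) * (-Complex.I) - Complex.I * (1 + Complex.I) * (α₁ * β₂) := by
          simp [map_add, Complex.conj_I]; ring
        rw [this, h]
        intro hc
        apply_fun Complex.im at hc
        simp at hc
        norm_num [Complex.add_im, Complex.mul_im] at hc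
    · refine ⟨1/2, 1/2, ?_, ?_⟩
      · norm_num [Complex.conj_ofNat]
      · have : (starRingEnd ℂ (1/2 : ℂ) + (1/2 : ℂ) * 0) *
            ((1/2 : ℂ) * 0 + starRingEnd ℂ (1/2 : ℂ)) -
            ((1/2 : ℂ) * β₂) * ((1/2 : ℂ) * α₁) = (1 - α₁ * β₂) / 4 := by
          simp [Complex.conj_ofNat]; ring
        rw [this]
        intro hc
        apply h
        field_simp at hc
        linear_combination -hc
end

section
/- Let P₁,…,P_q be subsets of Kⁿ and k ≤ q. There exists a linearly independent family {ξ₁,…,ξ_k} with ξ_j ∈ P_{i_j} for some indices 1 ≤ i₁ < i₂ < … < i_k ≤ q if and only if dim(∑_{i∈S} span P_i) ≥ card S − (q − k) for every subset S ⊆ {1,…,q} with card S > q − k. -/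
open Submodule Module

section RadoAux

variable {K : Type*} [Field K] {V : Type*} [AddCommGroup V] [Module K V] [FiniteDimensional K V]
  [DecidableEq V]

set_option linter.unusedSectionVars false

private lemma radoAux_small {q : ℕ} (P : Fin q → Finset V)
    (h : ∀ S : Finset (Fin q), S.card ≤ finrank K (span K (↑(S.biUnion P) : Set V)))
    (h1 : ∀ i, (P i).card ≤ 1) :
    ∃ ξ : Fin q → V, (∀ i, ξ i ∈ P i) ∧ LinearIndependent K ξ := by
  have hne : ∀ i, (P i).Nonempty := by
    intro i
    by_contra hne
    rw [Finset.not_nonempty_iff_eq_empty] at hne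
    have := h {i}
    simp [hne] at this
  choose ξ hξ using fun i => (hne i).exists_mem
  refine ⟨ξ, hξ, ?_⟩
  have hPi : ∀ i, P i = {ξ i} := by
    intro i
    have h1' : (P i).card = 1 := le_antisymm (h1 i) (Finset.card_pos.mpr (hne i))
    obtain ⟨a, ha⟩ := Finset.card_eq_one.mp h1'
    have := hξ i
    rw [ha, Finset.mem_singleton] at this
    rw [ha, this]
  have hrange : Set.range ξ = (↑((Finset.univ : Finset (Fin q)).biUnion P) : Set V) := by
    ext v
    simp only [Set.mem_range, Finset.coe_biUnion, Finset.mem_coe, Finset.mem_univ, Set.mem_iUnion,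
      Finset.mem_coe, true_and]
    constructor
    · rintro ⟨i, rfl⟩; exact ⟨i, trivial, hξ i⟩
    · rintro ⟨i, -, hv⟩; rw [hPi i, Finset.mem_singleton] at hv; exact ⟨i, hv.symm⟩
  rw [linearIndependent_iff_card_eq_finrank_span, Fintype.card_fin, Set.finrank, hrange]
  refine le_antisymm ?_ ?_
  · simpa using h Finset.univ
  · have : Finset.univ.biUnion P = Finset.univ.image ξ := by
      ext v
      simp only [Finset.mem_biUnion, Finset.mem_univ, true_and, Finset.mem_image]
      constructor
      · rintro ⟨i, hv⟩; rw [hPi i, Finset.mem_singleton] at hv; exact ⟨i, hv.symm⟩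
      · rintro ⟨i, -, rfl⟩; exact ⟨i, hξ i⟩
    calc finrank K (span K (↑(Finset.univ.biUnion P) : Set V))
        ≤ (Finset.univ.biUnion P).card := finrank_span_finset_le_card _
      _ = (Finset.univ.image ξ).card := by rw [this]
      _ ≤ q := Finset.card_image_le.trans (by simp)

private lemma radoAux_step {q : ℕ} (P : Fin q → Finset V)
    (h : ∀ S : Finset (Fin q), S.card ≤ finrank K (span K (↑(S.biUnion P) : Set V)))
    (i₀ : Fin q) (h2 : 1 < (P i₀).card) :
    ∃ x ∈ P i₀, ∀ S : Finset (Fin q),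
      S.card ≤ finrank K
        (span K (↑(S.biUnion (Function.update P i₀ ((P i₀).erase x))) : Set V)) := by
  by_contra hcon
  push_neg at hcon
  obtain ⟨x, hx, y, hy, hxy⟩ := Finset.one_lt_card.mp h2
  obtain ⟨Sx, hSx⟩ := hcon x hx
  obtain ⟨Sy, hSy⟩ := hcon y hy
  set Px := Function.update P i₀ ((P i₀).erase x) with hPx
  set Py := Function.update P i₀ ((P i₀).erase y) with hPy
  have hmem : ∀ (z : V) (S : Finset (Fin q)),
      finrank K (span K (↑(S.biUnion (Function.update P i₀ ((P i₀).erase z))) : Set V)) < S.card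
      → i₀ ∈ S := by
    intro z S hS
    by_contra hi
    have : S.biUnion (Function.update P i₀ ((P i₀).erase z)) = S.biUnion P := by
      apply Finset.biUnion_congr rfl
      intro i hi'
      rw [Function.update_of_ne (by rintro rfl; exact hi hi')]
    rw [this] at hS
    exact absurd (h S) (not_le.mpr hS)
  have hix : i₀ ∈ Sx := hmem x Sx hSx
  have hiy : i₀ ∈ Sy := hmem y Sy hSy
  set Tx := Sx.erase i₀ with hTx
  set Ty := Sy.erase i₀ with hTy
  set A := span K (↑(Sx.biUnion Px) : Set V) with hA
  set B := span K (↑(Sy.biUnion Py) : Set V) with hB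
  have hAcard : finrank K A ≤ Tx.card := by
    have : Tx.card = Sx.card - 1 := Finset.card_erase_of_mem hix
    omega
  have hBcard : finrank K B ≤ Ty.card := by
    have : Ty.card = Sy.card - 1 := Finset.card_erase_of_mem hiy
    omega
  have hsup : span K (↑((insert i₀ (Tx ∪ Ty)).biUnion P) : Set V) ≤ A ⊔ B := by
    rw [span_le]
    intro v hv
    simp only [Finset.coe_biUnion, Set.mem_iUnion, Finset.mem_coe, Finset.mem_insert,
      Finset.mem_union] at hv
    obtain ⟨i, hi, hvi⟩ := hv
    have hgenA : ∀ w : V, w ∈ Sx.biUnion Px → w ∈ A ⊔ B := fun w hw =>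
      le_sup_left (α := Submodule K V) (subset_span hw)
    have hgenB : ∀ w : V, w ∈ Sy.biUnion Py → w ∈ A ⊔ B := fun w hw =>
      le_sup_right (α := Submodule K V) (subset_span hw)
    rcases hi with rfl | hi | hi
    · by_cases hvx : v = x
      · refine hgenB v (Finset.mem_biUnion.mpr ⟨i, hiy, ?_⟩)
        rw [hPy, Function.update_self]
        exact Finset.mem_erase.mpr ⟨hvx ▸ hxy, hvi⟩
      · refine hgenA v (Finset.mem_biUnion.mpr ⟨i, hix, ?_⟩)
        rw [hPx, Function.update_self]
        exact Finset.mem_erase.mpr ⟨hvx, hvi⟩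
    · refine hgenA v (Finset.mem_biUnion.mpr ⟨i, Finset.mem_of_mem_erase hi, ?_⟩)
      rw [hPx, Function.update_of_ne (Finset.ne_of_mem_erase hi)]
      exact hvi
    · refine hgenB v (Finset.mem_biUnion.mpr ⟨i, Finset.mem_of_mem_erase hi, ?_⟩)
      rw [hPy, Function.update_of_ne (Finset.ne_of_mem_erase hi)]
      exact hvi
  have hinf : span K (↑((Tx ∩ Ty).biUnion P) : Set V) ≤ A ⊓ B := by
    rw [span_le]
    intro v hv
    simp only [Finset.coe_biUnion, Set.mem_iUnion, Finset.mem_coe] at hv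
    obtain ⟨i, hi, hvi⟩ := hv
    rw [Finset.mem_inter] at hi
    constructor
    · refine subset_span (Finset.mem_biUnion.mpr ⟨i, Finset.mem_of_mem_erase hi.1, ?_⟩)
      rw [hPx, Function.update_of_ne (Finset.ne_of_mem_erase hi.1)]; exact hvi
    · refine subset_span (Finset.mem_biUnion.mpr ⟨i, Finset.mem_of_mem_erase hi.2, ?_⟩)
      rw [hPy, Function.update_of_ne (Finset.ne_of_mem_erase hi.2)]; exact hvi
  have hi₀ : i₀ ∉ Tx ∪ Ty := by simp [hTx, hTy]
  have hc1 : (insert i₀ (Tx ∪ Ty)).card = (Tx ∪ Ty).card + 1 :=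
    Finset.card_insert_of_notMem hi₀
  have hc2 : (Tx ∪ Ty).card + (Tx ∩ Ty).card = Tx.card + Ty.card :=
    Finset.card_union_add_card_inter Tx Ty
  have e1 : (insert i₀ (Tx ∪ Ty)).card ≤ finrank K (A ⊔ B : Submodule K V) :=
    (h _).trans (Submodule.finrank_mono hsup)
  have e2 : (Tx ∩ Ty).card ≤ finrank K (A ⊓ B : Submodule K V) :=
    (h _).trans (Submodule.finrank_mono hinf)
  have e3 : finrank K (A ⊔ B : Submodule K V) + finrank K (A ⊓ B : Submodule K V)
      = finrank K A + finrank K B := Submodule.finrank_sup_add_finrank_inf_eq A B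
  omega

private lemma radoAux {q : ℕ} (P : Fin q → Finset V)
    (h : ∀ S : Finset (Fin q), S.card ≤ finrank K (span K (↑(S.biUnion P) : Set V))) :
    ∃ ξ : Fin q → V, (∀ i, ξ i ∈ P i) ∧ LinearIndependent K ξ := by
  obtain ⟨N, hN⟩ : ∃ N, ∑ i, (P i).card ≤ N := ⟨_, le_refl _⟩
  induction N generalizing P with
  | zero =>
    refine radoAux_small P h (fun i => ?_)
    have h5 : (P i).card ≤ ∑ j, (P j).card :=
      Finset.single_le_sum (f := fun j => (P j).card) (fun j _ => Nat.zero_le _)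
        (Finset.mem_univ i)
    omega
  | succ N ih =>
    by_cases h1 : ∀ i, (P i).card ≤ 1
    · exact radoAux_small P h h1
    · push_neg at h1
      obtain ⟨i₀, hi₀⟩ := h1
      obtain ⟨x, hx, hP'⟩ := radoAux_step P h i₀ hi₀
      set P' := Function.update P i₀ ((P i₀).erase x) with hP'def
      have hsum : ∑ i, (P' i).card ≤ N := by
        have heq : ∑ i, (P' i).card
            = ∑ i, ((Function.update (fun i => (P i).card) i₀ (((P i₀).erase x).card)) i) := by
          apply Finset.sum_congr rfl
          intro i _
          by_cases hii : i = i₀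
          · subst hii; simp [hP'def]
          · simp [hP'def, Function.update_of_ne hii]
        have h2 := Finset.sum_update_of_mem (Finset.mem_univ i₀)
          (f := fun i => (P i).card) (b := ((P i₀).erase x).card)
        have h3 : ((P i₀).erase x).card = (P i₀).card - 1 := Finset.card_erase_of_mem hx
        have h4 : (P i₀).card + ∑ i ∈ Finset.univ \ {i₀}, (P i).card = ∑ i, (P i).card := by
          rw [← Finset.erase_eq]
          exact Finset.add_sum_erase Finset.univ (fun i => (P i).card) (Finset.mem_univ i₀)
        rw [heq, h2, h3]
        omega
      obtain ⟨ξ, hξmem, hξind⟩ := ih P' hP' hsum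
      refine ⟨ξ, fun i => ?_, hξind⟩
      have := hξmem i
      by_cases hii : i = i₀
      · subst hii
        rw [hP'def, Function.update_self] at this
        exact Finset.mem_of_mem_erase this
      · rwa [hP'def, Function.update_of_ne hii] at this

end RadoAux

section RadoHelpers

variable {K : Type*} [Field K] {V : Type*} [AddCommGroup V] [Module K V] [FiniteDimensional K V]
  {U : Type*} [AddCommGroup U] [Module K U] [FiniteDimensional K U]

private lemma finrank_prod_top (W : Submodule K V) :
    finrank K (W.prod (⊤ : Submodule K U)) = finrank K W + finrank K U := by
  have h1 : W.prod (⊤ : Submodule K U)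
      = W.map (LinearMap.inl K V U) ⊔ (⊤ : Submodule K U).map (LinearMap.inr K V U) :=
    LinearMap.prod_eq_sup_map W ⊤
  have h2 : W.map (LinearMap.inl K V U) ⊓ (⊤ : Submodule K U).map (LinearMap.inr K V U) = ⊥ := by
    rw [Submodule.map_inl, Submodule.map_inr, Submodule.prod_inf_prod]
    simp
  have h3 := Submodule.finrank_sup_add_finrank_inf_eq
    (W.map (LinearMap.inl K V U)) ((⊤ : Submodule K U).map (LinearMap.inr K V U))
  rw [h2] at h3
  have h4 : finrank K (W.map (LinearMap.inl K V U)) = finrank K W :=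
    (LinearEquiv.finrank_eq (Submodule.equivMapOfInjective _ LinearMap.inl_injective W)).symm
  have h5 : finrank K ((⊤ : Submodule K U).map (LinearMap.inr K V U)) = finrank K U := by
    rw [(LinearEquiv.finrank_eq (Submodule.equivMapOfInjective _ LinearMap.inr_injective ⊤)).symm]
    exact finrank_top K U
  rw [h1]
  simp only [finrank_bot] at h3
  omega

private lemma card_le_finrank_of_mem {ι : Type*} [Fintype ι] {f : ι → V} {W : Submodule K V}
    (hind : LinearIndependent K f) (hmem : ∀ i, f i ∈ W) :
    Fintype.card ι ≤ finrank K W := by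
  rw [linearIndependent_iff_card_eq_finrank_span.mp hind]
  exact Submodule.finrank_mono (span_le.mpr (Set.range_subset_iff.mpr hmem))

end RadoHelpers

/-- Partial-transversal version of Rado's theorem (Ore/Mirsky). -/
theorem rado_partial_transversal {K : Type*} [Field K] (n q k : ℕ) (hk : k ≤ q)
    (P : Fin q → Set (Fin n → K)) :
    (∃ (idx : Fin k → Fin q) (ξ : Fin k → (Fin n → K)),
      StrictMono idx ∧ (∀ j, ξ j ∈ P (idx j)) ∧ LinearIndependent K ξ) ↔
      ∀ S : Finset (Fin q), q - k < S.card →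
        S.card - (q - k) ≤ Module.finrank K ↥(⨆ i ∈ S, Submodule.span K (P i)) := by
  classical
  constructor
  · rintro ⟨idx, ξ, hmono, hmem, hind⟩ S hS
    set W := ⨆ i ∈ S, Submodule.span K (P i) with hW
    have hsub : LinearIndependent K (fun j : {j : Fin k // idx j ∈ S} => ξ (j : Fin k)) :=
      hind.comp _ Subtype.val_injective
    have hmem' : ∀ j : {j : Fin k // idx j ∈ S}, ξ (j : Fin k) ∈ W := by
      intro j
      have hle : Submodule.span K (P (idx (j : Fin k))) ≤ W :=
        le_iSup₂ (f := fun i (_ : i ∈ S) => Submodule.span K (P i)) (idx (j : Fin k)) j.2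
      exact hle (subset_span (hmem (j : Fin k)))
    have hcard := card_le_finrank_of_mem hsub hmem'
    set J : Finset (Fin k) := Finset.univ.filter (fun j => idx j ∈ S) with hJ
    have hcardJ : Fintype.card {j : Fin k // idx j ∈ S} = J.card := by
      rw [hJ]; exact Fintype.card_subtype _
    have hinj : Function.Injective idx := hmono.injective
    set I : Finset (Fin q) := Finset.univ.image idx with hI
    have hIcard : I.card = k := by
      rw [hI, Finset.card_image_of_injective _ hinj, Finset.card_univ, Fintype.card_fin]
    have himg : J.image idx = S ∩ I := by
      ext v
      simp only [hJ, hI, Finset.mem_image, Finset.mem_filter, Finset.mem_univ, true_and,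
        Finset.mem_inter]
      constructor
      · rintro ⟨j, hj, rfl⟩; exact ⟨hj, j, rfl⟩
      · rintro ⟨hv, j, rfl⟩; exact ⟨j, hv, rfl⟩
    have hJcard : J.card = (S ∩ I).card := by
      rw [← himg, Finset.card_image_of_injective _ hinj]
    have h1 : (S ∩ I).card + (S \ I).card = S.card := Finset.card_inter_add_card_sdiff S I
    have h2 : (S \ I).card ≤ (Finset.univ \ I).card :=
      Finset.card_le_card (Finset.sdiff_subset_sdiff (Finset.subset_univ S) le_rfl)
    have h3 : (Finset.univ \ I).card = q - k := by
      rw [Finset.card_sdiff_of_subset (Finset.subset_univ I), Finset.card_univ, Fintype.card_fin, hIcard]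
    omega
  · intro hrank
    set d := q - k with hd
    have hB : ∀ i, ∃ B : Finset (Fin n → K), ↑B ⊆ P i
        ∧ Submodule.span K (B : Set (Fin n → K)) = Submodule.span K (P i) := by
      intro i
      obtain ⟨b, hb1, hb2, hb3⟩ := exists_linearIndependent K (P i)
      have hfin : b.Finite := hb3.setFinite
      exact ⟨hfin.toFinset, by simpa using hb1, by rw [Set.Finite.coe_toFinset]; exact hb2⟩
    choose B hBsub hBspan using hB
    set e : Fin d → (Fin n → K) × (Fin d → K) := fun j => (0, Pi.single j 1) with he
    set Q : Fin q → Finset ((Fin n → K) × (Fin d → K)) := fun i =>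
      (B i).image (fun v => ((v, 0) : (Fin n → K) × (Fin d → K))) ∪ Finset.univ.image e with hQ
    have hQmem : ∀ i (w : (Fin n → K) × (Fin d → K)), w ∈ Q i ↔
        ((∃ b ∈ B i, w = (b, 0)) ∨ ∃ j, w = e j) := by
      intro i w
      rw [hQ]
      simp only [Finset.mem_union, Finset.mem_image, Finset.mem_univ, true_and]
      constructor
      · rintro (⟨b, hb, rfl⟩ | ⟨j, -, rfl⟩)
        · exact Or.inl ⟨b, hb, rfl⟩
        · exact Or.inr ⟨j, rfl⟩
      · rintro (⟨b, hb, rfl⟩ | ⟨j, rfl⟩)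
        · exact Or.inl ⟨b, hb, rfl⟩
        · exact Or.inr ⟨j, rfl⟩
    have hspanQ : ∀ S : Finset (Fin q), S.Nonempty →
        Submodule.span K (↑(S.biUnion Q) : Set ((Fin n → K) × (Fin d → K)))
          = (⨆ i ∈ S, Submodule.span K (P i)).prod (⊤ : Submodule K (Fin d → K)) := by
      intro S hSne
      apply le_antisymm
      · rw [span_le]
        intro w hw
        simp only [Finset.coe_biUnion, Set.mem_iUnion, Finset.mem_coe] at hw
        obtain ⟨i, hi, hwi⟩ := hw
        rw [hQmem] at hwi
        rcases hwi with ⟨b, hb, rfl⟩ | ⟨j, rfl⟩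
        · refine Submodule.mem_prod.mpr ⟨?_, trivial⟩
          have hle : Submodule.span K (P i) ≤ ⨆ i ∈ S, Submodule.span K (P i) :=
            le_iSup₂ (f := fun i (_ : i ∈ S) => Submodule.span K (P i)) i hi
          exact hle (subset_span (hBsub i hb))
        · exact Submodule.mem_prod.mpr ⟨Submodule.zero_mem _, trivial⟩
      · rintro ⟨v, w⟩ hvw
        rw [Submodule.mem_prod] at hvw
        have hvw1 : ((v, 0) : (Fin n → K) × (Fin d → K))
            ∈ Submodule.span K (↑(S.biUnion Q) : Set ((Fin n → K) × (Fin d → K))) := by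
          have hmap : (⨆ i ∈ S, Submodule.span K (P i)).map (LinearMap.inl K _ _)
              ≤ Submodule.span K (↑(S.biUnion Q) : Set ((Fin n → K) × (Fin d → K))) := by
            rw [Submodule.map_le_iff_le_comap]
            refine iSup₂_le fun i hi => ?_
            rw [← hBspan i, span_le]
            intro b hb
            refine subset_span (Finset.mem_biUnion.mpr ⟨i, hi, ?_⟩)
            exact (hQmem i _).mpr (Or.inl ⟨b, hb, rfl⟩)
          exact hmap ⟨v, hvw.1, rfl⟩
        have hvw2 : ((0, w) : (Fin n → K) × (Fin d → K))
            ∈ Submodule.span K (↑(S.biUnion Q) : Set ((Fin n → K) × (Fin d → K))) := by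
          obtain ⟨i, hi⟩ := hSne
          have htop : w ∈ Submodule.span K (Set.range fun j : Fin d => Pi.single j (1 : K)) := by
            have := (Pi.basisFun K (Fin d)).span_eq
            simp only [Pi.basisFun] at this
            rw [show (Set.range fun j : Fin d => Pi.single j (1 : K))
                = Set.range (Pi.basisFun K (Fin d)) by
              ext u; simp [Pi.basisFun_apply], (Pi.basisFun K (Fin d)).span_eq]
            trivial
          have hmap : (Submodule.span K (Set.range fun j : Fin d => Pi.single j (1 : K))).map
                (LinearMap.inr K (Fin n → K) (Fin d → K))
              ≤ Submodule.span K (↑(S.biUnion Q) : Set ((Fin n → K) × (Fin d → K))) := by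
            rw [Submodule.map_le_iff_le_comap, span_le]
            rintro u ⟨j, rfl⟩
            refine subset_span (Finset.mem_biUnion.mpr ⟨i, hi, ?_⟩)
            exact (hQmem i _).mpr (Or.inr ⟨j, rfl⟩)
          exact hmap ⟨w, htop, rfl⟩
        have : ((v, w) : (Fin n → K) × (Fin d → K)) = (v, 0) + (0, w) := by simp
        rw [this]
        exact Submodule.add_mem _ hvw1 hvw2
    have hhyp : ∀ S : Finset (Fin q),
        S.card ≤ finrank K (Submodule.span K
          (↑(S.biUnion Q) : Set ((Fin n → K) × (Fin d → K)))) := by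
      intro S
      rcases S.eq_empty_or_nonempty with rfl | hSne
      · simp
      · rw [hspanQ S hSne, finrank_prod_top]
        have hdim : finrank K (Fin d → K) = d := by simp
        rw [hdim]
        by_cases hc : S.card ≤ d
        · omega
        · have := hrank S (by omega)
          omega
    obtain ⟨η, hηmem, hηind⟩ := radoAux Q hhyp
    set T : Finset (Fin q) := Finset.univ.filter (fun i => ∃ b ∈ P i, η i = (b, 0)) with hT
    have hTk : k ≤ T.card := by
      have hgi : ∀ i ∈ Finset.univ \ T, ∃ j : Fin d, η i = e j := by
        intro i hi
        rw [Finset.mem_sdiff, hT, Finset.mem_filter] at hi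
        have := (hQmem i (η i)).mp (hηmem i)
        rcases this with ⟨b, hb, hbe⟩ | hj
        · exact absurd ⟨Finset.mem_univ i, b, hBsub i hb, hbe⟩ hi.2
        · exact hj
      have hcard : (Finset.univ \ T).card ≤ (Finset.univ.image e).card := by
        refine Finset.card_le_card_of_injOn η ?_ ?_
        · intro i hi
          obtain ⟨j, hj⟩ := hgi i hi
          rw [hj]
          exact Finset.mem_image.mpr ⟨j, Finset.mem_univ j, rfl⟩
        · intro i _ i' _ hii
          exact hηind.injective hii
      have hcard2 : (Finset.univ.image e).card ≤ d :=
        Finset.card_image_le.trans (by simp)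
      rw [Finset.card_sdiff_of_subset (Finset.subset_univ T), Finset.card_univ, Fintype.card_fin] at hcard
      have hTle : T.card ≤ q := (Finset.card_le_card (Finset.subset_univ T)).trans (by simp)
      omega
    obtain ⟨T', hT'sub, hT'card⟩ := Finset.exists_subset_card_eq hTk
    set idx : Fin k ↪o Fin q := T'.orderEmbOfFin hT'card with hidx
    have hidxT : ∀ j, idx j ∈ T := fun j => hT'sub (T'.orderEmbOfFin_mem hT'card j)
    have hsel : ∀ j, ∃ b ∈ P (idx j), η (idx j) = (b, 0) := by
      intro j
      have := hidxT j
      rw [hT, Finset.mem_filter] at this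
      exact this.2
    refine ⟨fun j => idx j, fun j => (η (idx j)).1, idx.strictMono, ?_, ?_⟩
    · intro j
      obtain ⟨b, hb, hbe⟩ := hsel j
      show (η (idx j)).1 ∈ P (idx j)
      rw [hbe]
      exact hb
    · have hcomp : LinearIndependent K (fun j => η (idx j)) :=
        hηind.comp _ idx.injective
      apply LinearIndependent.of_comp (LinearMap.inl K (Fin n → K) (Fin d → K))
      have : (LinearMap.inl K (Fin n → K) (Fin d → K) ∘ fun j => (η (idx j)).1)
          = fun j => η (idx j) := by
        funext j
        obtain ⟨b, hb, hbe⟩ := hsel j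
        simp [hbe, LinearMap.inl_apply]
      rw [this]
      exact hcomp
end

section
/- Let V₁,…,V_N be matrices over a field K, each with n rows, such that the block matrix [V₁ V₂ … V_N] has rank n. Then for almost all choices of parameter column vectors k₁,…,k_N (i.e., for all choices outside a proper algebraic subset of the parameter space, equivalently outside the zero set of a nonzero polynomial), the n×N matrix [V₁k₁ V₂k₂ … V_Nk_N] has rank n, provided N = n and the generic determinant polynomial det[V₁k₁ … V_Nk_N] in the entries of k₁,…,k_N is not identically zero; moreover, this determinant polynomial is not identically zero whenever for every subset S ⊆ {1,…,n}, dim(∑_{i∈S} col-span V_i) ≥ card S. -/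
open Matrix

open Module Submodule Set

theorem rado_transversal {K V ι : Type*} [Field K] [AddCommGroup V] [Module K V]
    [FiniteDimensional K V] [Fintype ι] [DecidableEq ι] (W : ι → Submodule K V)
    (h : ∀ S : Finset ι, S.card ≤ finrank K ↥(⨆ i ∈ S, W i)) :
    ∃ v : ι → V, (∀ i, v i ∈ W i) ∧ LinearIndependent K v := by
  generalize hN : ∑ i, finrank K ↥(W i) = N
  induction N using Nat.strong_induction_on generalizing W with
  | _ N IH =>
  by_cases hd : ∃ i0, 2 ≤ finrank K ↥(W i0)
  · obtain ⟨i0, hi0⟩ := hd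
    by_cases hex : ∃ H : Submodule K V, H < W i0 ∧
        ∀ S : Finset ι, S.card ≤ finrank K ↥(⨆ i ∈ S, Function.update W i0 H i)
    · obtain ⟨H, hHlt, hHcond⟩ := hex
      have hlt : ∑ i, finrank K ↥(Function.update W i0 H i) < N := by
        rw [← hN]
        refine Finset.sum_lt_sum (fun i _ => ?_) ⟨i0, Finset.mem_univ i0, ?_⟩
        · rcases eq_or_ne i i0 with rfl | hne
          · rw [Function.update_self]
            exact (Submodule.finrank_lt_finrank_of_lt hHlt).le
          · rw [Function.update_of_ne hne]
        · rw [Function.update_self]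
          exact Submodule.finrank_lt_finrank_of_lt hHlt
      obtain ⟨v, hv, hli⟩ := IH _ hlt _ hHcond rfl
      refine ⟨v, fun i => ?_, hli⟩
      rcases eq_or_ne i i0 with rfl | hne
      · exact hHlt.le (by simpa using hv i)
      · simpa [Function.update_of_ne hne] using hv i
    · push_neg at hex
      -- build two proper submodules of W i0 whose sup is W i0
      exfalso
      set d := finrank K ↥(W i0) with hdd
      have hd2 : 2 ≤ d := hi0
      let b : Basis (Fin d) K ↥(W i0) := finBasis K ↥(W i0)
      let c : Fin d → V := fun j => (b j : V)
      have hcmem : ∀ j, c j ∈ W i0 := fun j => (b j).2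
      have hcli : LinearIndependent K c :=
        b.linearIndependent.map' (W i0).subtype (Submodule.ker_subtype _)
      have hcspan : Submodule.span K (Set.range c) = W i0 := by
        have : Submodule.span K (Set.range c) =
            Submodule.map (W i0).subtype (Submodule.span K (Set.range b)) := by
          rw [Submodule.map_span]
          congr 1
          ext x
          simp [c]
        rw [this, b.span_eq, Submodule.map_top, Submodule.range_subtype]
      let p0 : Fin d := ⟨0, by omega⟩
      let p1 : Fin d := ⟨1, by omega⟩
      have h01 : p0 ≠ p1 := by simp [p0, p1, Fin.ext_iff]
      let H0 : Submodule K V := Submodule.span K (c '' {j | j ≠ p0})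
      let H1 : Submodule K V := Submodule.span K (c '' {j | j ≠ p1})
      have hH0le : H0 ≤ W i0 := by
        rw [← hcspan]; exact Submodule.span_mono (Set.image_subset_range _ _ |>.trans (by simp))
      have hH1le : H1 ≤ W i0 := by
        rw [← hcspan]; exact Submodule.span_mono (Set.image_subset_range _ _ |>.trans (by simp))
      have hH0lt : H0 < W i0 := by
        refine lt_of_le_of_ne hH0le fun e => ?_
        have := hcli.notMem_span_image (x := p0) (s := {j | j ≠ p0}) (by simp)
        exact this (e ▸ hcmem p0 : c p0 ∈ H0)
      have hH1lt : H1 < W i0 := by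
        refine lt_of_le_of_ne hH1le fun e => ?_
        have := hcli.notMem_span_image (x := p1) (s := {j | j ≠ p1}) (by simp)
        exact this (e ▸ hcmem p1 : c p1 ∈ H1)
      have hsup : H0 ⊔ H1 = W i0 := by
        refine le_antisymm (sup_le hH0le hH1le) ?_
        rw [← hcspan, ← Submodule.span_union, ← Set.image_union]
        apply Submodule.span_mono
        intro x hx
        obtain ⟨j, rfl⟩ := hx
        refine ⟨j, ?_, rfl⟩
        rcases eq_or_ne j p0 with rfl | hj
        · exact Or.inr h01
        · exact Or.inl hj
      obtain ⟨S0, hS0⟩ := hex H0 hH0lt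
      obtain ⟨S1, hS1⟩ := hex H1 hH1lt
      have hmem0 : i0 ∈ S0 := by
        by_contra hn
        have heq : (⨆ i ∈ S0, Function.update W i0 H0 i) = ⨆ i ∈ S0, W i := by
          refine iSup_congr fun i => iSup_congr fun hi => ?_
          exact Function.update_of_ne (fun e : i = i0 => hn (e ▸ hi)) H0 W
        rw [heq] at hS0
        exact absurd (h S0) (not_le.mpr hS0)
      have hmem1 : i0 ∈ S1 := by
        by_contra hn
        have heq : (⨆ i ∈ S1, Function.update W i0 H1 i) = ⨆ i ∈ S1, W i := by
          refine iSup_congr fun i => iSup_congr fun hi => ?_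
          exact Function.update_of_ne (fun e : i = i0 => hn (e ▸ hi)) H1 W
        rw [heq] at hS1
        exact absurd (h S1) (not_le.mpr hS1)
      set A := ⨆ i ∈ S0, Function.update W i0 H0 i with hA
      set B := ⨆ i ∈ S1, Function.update W i0 H1 i with hB
      have hWle : ∀ i ∈ S0, i ≠ i0 → W i ≤ A := fun i hi hne => by
        rw [← Function.update_of_ne hne H0 W]
        exact le_iSup₂_of_le i hi le_rfl
      have hWleB : ∀ i ∈ S1, i ≠ i0 → W i ≤ B := fun i hi hne => by
        rw [← Function.update_of_ne hne H1 W]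
        exact le_iSup₂_of_le i hi le_rfl
      have hABsup : (⨆ i ∈ S0 ∪ S1, W i) ≤ A ⊔ B := by
        refine iSup₂_le fun i hi => ?_
        rcases eq_or_ne i i0 with hE | hne
        · rw [hE, ← hsup]
          refine sup_le_sup ?_ ?_
          · have h5 : Function.update W i0 H0 i0 ≤ A := le_iSup₂_of_le i0 hmem0 le_rfl
            simpa using h5
          · have h5 : Function.update W i0 H1 i0 ≤ B := le_iSup₂_of_le i0 hmem1 le_rfl
            simpa using h5
        · rcases Finset.mem_union.mp hi with h' | h'
          · exact le_sup_of_le_left (hWle i h' hne)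
          · exact le_sup_of_le_right (hWleB i h' hne)
      have hABinf : (⨆ i ∈ (S0 ∩ S1).erase i0, W i) ≤ A ⊓ B := by
        refine iSup₂_le fun i hi => ?_
        obtain ⟨hne, hi'⟩ := Finset.mem_erase.mp hi
        obtain ⟨h0, h1⟩ := Finset.mem_inter.mp hi'
        exact le_inf (hWle i h0 hne) (hWleB i h1 hne)
      have key := Submodule.finrank_sup_add_finrank_inf_eq A B
      have c1 : (S0 ∪ S1).card ≤ finrank K ↥(A ⊔ B) :=
        (h (S0 ∪ S1)).trans (Submodule.finrank_mono hABsup)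
      have c2 : ((S0 ∩ S1).erase i0).card ≤ finrank K ↥(A ⊓ B) :=
        (h _).trans (Submodule.finrank_mono hABinf)
      have hcard : ((S0 ∩ S1).erase i0).card = (S0 ∩ S1).card - 1 :=
        Finset.card_erase_of_mem (Finset.mem_inter.mpr ⟨hmem0, hmem1⟩)
      have hcards := Finset.card_union_add_card_inter S0 S1
      have hint : 1 ≤ (S0 ∩ S1).card :=
        Finset.card_pos.mpr ⟨i0, Finset.mem_inter.mpr ⟨hmem0, hmem1⟩⟩
      omega
  · push_neg at hd
    have h1 : ∀ i, finrank K ↥(W i) = 1 := by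
      intro i
      have h2 := h {i}
      have h3 : (⨆ j ∈ ({i} : Finset ι), W j) = W i := by simp
      rw [h3] at h2
      simp only [Finset.card_singleton] at h2
      have := hd i
      omega
    choose v hv hv0 using fun i => Submodule.exists_mem_ne_zero_of_ne_bot
      (p := W i) (by intro hb; have := h1 i; rw [hb] at this; simp at this)
    have hWspan : ∀ i, W i = Submodule.span K {v i} := by
      intro i
      refine (Submodule.eq_of_le_of_finrank_le
        ((Submodule.span_singleton_le_iff_mem _ _).mpr (hv i)) ?_).symm
      rw [h1 i, finrank_span_singleton (hv0 i)]
    refine ⟨v, hv, ?_⟩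
    rw [linearIndependent_iff_card_eq_finrank_span]
    have hspan : Submodule.span K (Set.range v) = ⨆ i, W i := by
      rw [span_range_eq_iSup]
      exact iSup_congr fun i => ((hWspan i).symm : Submodule.span K {v i} = W i)
    have hle : (Set.range v).finrank K ≤ Fintype.card ι := finrank_range_le_card v
    have hge : Fintype.card ι ≤ (Set.range v).finrank K := by
      have h2 := h Finset.univ
      have h3 : (⨆ i ∈ Finset.univ, W i) = ⨆ i, W i := by simp
      rw [h3] at h2
      rw [Set.finrank, hspan]
      simpa using h2
    omega

open Matrix in

/-- Genericity statement: under the Rado dimension conditions, the determinant of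
[V₁k₁ … V_nk_n] is a nonzero polynomial in the parameters k₁,…,k_n, so for almost all
parameter choices (those outside its zero set) the matrix [V₁k₁ … V_nk_n] has rank n. -/
theorem generic_rank_of_rado {K : Type*} [Field K] [Infinite K] (n : ℕ)
    (m : Fin n → ℕ) (V : (i : Fin n) → Matrix (Fin n) (Fin (m i)) K)
    (hrank : (Matrix.of fun r (s : Σ i : Fin n, Fin (m i)) => V s.1 r s.2).rank = n)
    (hrado : ∀ S : Finset (Fin n),
      S.card ≤ Module.finrank K
        ↥(⨆ i ∈ S, Submodule.span K (Set.range (V i).transpose)))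
    (P : MvPolynomial ((i : Fin n) × Fin (m i)) K)
    (hP : P = Matrix.det (Matrix.of fun r i =>
      ∑ c : Fin (m i), MvPolynomial.X ⟨i, c⟩ * MvPolynomial.C (V i r c))) :
    P ≠ 0 ∧
      ∀ k : ((i : Fin n) × Fin (m i)) → K, MvPolynomial.eval k P ≠ 0 →
        (Matrix.of fun r i => (V i).mulVec (fun c => k ⟨i, c⟩) r).rank = n := by
  classical
  -- evaluation of P is the determinant of the specialized matrix
  have hev : ∀ k : ((i : Fin n) × Fin (m i)) → K,
      MvPolynomial.eval k P =
        (Matrix.of fun r i => (V i).mulVec (fun c => k ⟨i, c⟩) r).det := by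
    intro k
    rw [hP, RingHom.map_det]
    congr 1
    ext r i
    simp [Matrix.mulVec, dotProduct, mul_comm]
  -- determinant nonzero implies rank n
  have hrk : ∀ k : ((i : Fin n) × Fin (m i)) → K,
      MvPolynomial.eval k P ≠ 0 →
        (Matrix.of fun r i => (V i).mulVec (fun c => k ⟨i, c⟩) r).rank = n := by
    intro k hk
    rw [hev k] at hk
    have hu : IsUnit (Matrix.of fun r i => (V i).mulVec (fun c => k ⟨i, c⟩) r) :=
      (Matrix.isUnit_iff_isUnit_det _).mpr (isUnit_iff_ne_zero.mpr hk)
    rw [Matrix.rank_of_isUnit _ hu, Fintype.card_fin]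
  refine ⟨?_, hrk⟩
  -- use Rado to find a good evaluation point
  obtain ⟨v, hv, hli⟩ := rado_transversal
    (fun i => Submodule.span K (Set.range (V i).transpose)) hrado
  have hv' : ∀ i, ∃ ki : Fin (m i) → K, (V i).mulVec ki = v i := by
    intro i
    have : v i ∈ LinearMap.range (V i).mulVecLin := by
      rw [Matrix.range_mulVecLin]; exact hv i
    obtain ⟨ki, hki⟩ := this
    exact ⟨ki, hki⟩
  choose ks hks using hv'
  set k : ((i : Fin n) × Fin (m i)) → K := fun s => ks s.1 s.2 with hk
  have hMk : (Matrix.of fun r i => (V i).mulVec (fun c => k ⟨i, c⟩) r) =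
      Matrix.of (fun r i => v i r) := by
    ext r i
    have := congrFun (hks i) r
    simpa using this
  have hdet : (Matrix.of (fun r i => v i r)).det ≠ 0 := by
    intro h0
    obtain ⟨g, hg0, hg⟩ := Matrix.exists_mulVec_eq_zero_iff.mpr h0
    apply hg0
    have : ∀ i, g i = 0 := by
      rw [Fintype.linearIndependent_iff] at hli
      apply hli
      funext r
      have := congrFun hg r
      simpa [Matrix.mulVec, dotProduct, mul_comm,
        Finset.sum_apply] using this
    funext i; exact this i
  intro hP0
  have := hev k
  rw [hP0, hMk] at this
  exact hdet ((MvPolynomial.eval k).map_zero ▸ this).symm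
end
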